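/- arXiv:0809.1379 — 2 statements merged into one kernel-verified Lean document; each statement's English description precedes it below -/
import Mathlib

section
/- Let V be a finite set of n ≥ 4 vertices carrying a random graph as in the context, let s ∈ V be a source, let T ⊆ V∖{s} be a nonempty set of α terminals, and let λ ∈ (0,1]. Suppose P(C_{a,b} = 1) ≥ λ for every unordered pair {a,b} of distinct vertices, and that for every t ∈ T the random graph has the independence-in-cut property for (s,t). Assume λ²·(n−2) > ln(n−2), let d be a real with 1 < d < λ²·(n−2)/ln(n−2), and set ε = sqrt( d·ln(n−2) / (λ²·(n−2)) ). Then P( C_{s;T} ≤ (1−ε)·c_min ) ≤ 2·α / ( (n−2)^{2d} − (n−2)^{d+1} ). -/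
/-!
Every edge crossing an `s`-`t` cut `S` is an independent `{0,1}`-variable of mean at least `λ`,
so by Hoeffding's inequality `C(S) ≤ (1 - ε) c_min ≤ (1 - ε) E[C(S)]` has probability at most
`exp (-2 ε² λ² |S| |V ∖ S|) = (n - 2) ^ (-2 d |S| (n - |S|) / (n - 2))`.
Grouping the `s`-`t` cuts by `|S| = j + 1` and bounding
`binom(n - 2, j) ≤ (n - 2) ^ min(j, n - 2 - j)`, the union bound over the cuts of one terminal is
at most twice `(n - 2) ^ (-2 d)` times a geometric series of ratio `(n - 2) ^ (1 - d)`, i.e.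
`2 / ((n - 2) ^ (2 d) - (n - 2) ^ (d + 1))`; a last union bound over the `α` terminals gives the
factor `α`.
-/

open MeasureTheory ProbabilityTheory Finset

/-- The capacity of the cut determined by `S` (edges from `S` to its complement):
`C(S) = ∑_{a ∈ S, b ∉ S} C_{a,b}`. -/
noncomputable def cutCap {V Ω : Type*} [Fintype V] [DecidableEq V]
    (C : V → V → Ω → ℝ) (S : Finset V) (ω : Ω) : ℝ :=
  ∑ a ∈ S, ∑ b ∈ Sᶜ, C a b ω

/-- The independence-in-cut property for the pair `(s,t)`: for every `s`-`t` cut `S`,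
the family of edge variables crossing the cut is mutually independent. -/
def IndepInCut {V Ω : Type*} [Fintype V] [DecidableEq V] [MeasureSpace Ω]
    (C : V → V → Ω → ℝ) (s t : V) : Prop :=
  ∀ S : Finset V, s ∈ S → t ∉ S →
    iIndepFun
      (fun p : (S ×ˢ Sᶜ : Finset (V × V)) => C (p : V × V).1 (p : V × V).2) volume

open Real

section Hoeffding

variable {Ω ι : Type*} [MeasurableSpace Ω] {μ : Measure Ω} [Fintype ι] {X : ι → Ω → ℝ}

lemma measureReal_sum_le_sum_integral_sub_le (hind : iIndepFun X μ)
    (hmeas : ∀ i, AEMeasurable (X i) μ) (hX : ∀ i, ∀ᵐ ω ∂μ, X i ω ∈ Set.Icc (0 : ℝ) 1)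
    {t : ℝ} (ht : 0 ≤ t) :
    μ.real {ω | ∑ i, X i ω ≤ ∑ i, μ[X i] - t} ≤ exp (-2 * t ^ 2 / Fintype.card ι) := by
  have := hind.isProbabilityMeasure
  have hsub : ∀ i ∈ univ, HasSubgaussianMGF (fun ω ↦ μ[X i] - X i ω) ((‖(1 : ℝ) - 0‖₊ / 2) ^ 2) μ :=
    fun i _ ↦ (hasSubgaussianMGF_of_mem_Icc (hmeas i) (hX i)).neg.congr
      (ae_of_all _ fun ω ↦ by simp)
  have hindY : iIndepFun (fun i ω ↦ μ[X i] - X i ω) μ :=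
    hind.comp (fun i (x : ℝ) ↦ (∫ ω, X i ω ∂μ) - x) fun i ↦ measurable_const.sub measurable_id
  calc μ.real {ω | ∑ i, X i ω ≤ ∑ i, μ[X i] - t}
      = μ.real {ω | t ≤ ∑ i, (μ[X i] - X i ω)} := by
        congr 1
        ext ω
        simp only [Set.mem_ofPred_eq, sum_sub_distrib]
        constructor <;> intro h <;> linarith
    _ ≤ _ := HasSubgaussianMGF.measure_sum_ge_le_of_iIndepFun hindY hsub ht
    _ = exp (-2 * t ^ 2 / Fintype.card ι) := by
        congr 1
        simp only [sub_zero, nnnorm_one, one_div, inv_pow, sum_const, card_univ, nsmul_eq_mul,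
          NNReal.coe_mul, NNReal.coe_natCast, NNReal.coe_inv, NNReal.coe_pow, NNReal.coe_ofNat,
          neg_mul]
        ring

lemma measureReal_sum_le_mul_le (hind : iIndepFun X μ)
    (hmeas : ∀ i, AEMeasurable (X i) μ) (hX : ∀ i, ∀ᵐ ω ∂μ, X i ω ∈ Set.Icc (0 : ℝ) 1)
    {lam ε c : ℝ} (hlam : 0 ≤ lam) (hlow : ∀ i, lam ≤ μ[X i]) (hε0 : 0 ≤ ε) (hε1 : ε ≤ 1)
    (hc : c ≤ ∑ i, μ[X i]) :
    μ.real {ω | ∑ i, X i ω ≤ (1 - ε) * c} ≤ exp (-2 * ε ^ 2 * lam ^ 2 * Fintype.card ι) := by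
  have := hind.isProbabilityMeasure
  set N : ℝ := (Fintype.card ι : ℝ)
  set M := ∑ i, μ[X i]
  have hNM : lam * N ≤ M := by
    simpa [N, mul_comm] using sum_le_sum fun i (_ : i ∈ univ) ↦ hlow i
  calc μ.real {ω | ∑ i, X i ω ≤ (1 - ε) * c}
      ≤ μ.real {ω | ∑ i, X i ω ≤ M - ε * M} :=
        measureReal_mono fun ω h ↦ by
          simp only [Set.mem_ofPred_eq] at h ⊢
          nlinarith [mul_le_mul_of_nonneg_left hc (sub_nonneg.2 hε1)]
    _ ≤ exp (-2 * (ε * M) ^ 2 / N) :=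
        measureReal_sum_le_sum_integral_sub_le hind hmeas hX
          (mul_nonneg hε0 ((by positivity : 0 ≤ lam * N).trans hNM))
    _ ≤ exp (-2 * ε ^ 2 * lam ^ 2 * N) := by
        refine exp_le_exp.2 ?_
        have h1 : ε ^ 2 * lam ^ 2 * N = (ε * lam * N) ^ 2 / N := by
          rcases eq_or_ne N 0 with h | h
          · simp [h]
          · field_simp
        have h2 : (ε * lam * N) ^ 2 / N ≤ (ε * M) ^ 2 / N := by
          gcongr ?_ ^ 2 / _
          rw [mul_assoc]
          exact mul_le_mul_of_nonneg_left hNM hε0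
        rw [mul_div_assoc]
        linarith

end Hoeffding

lemma integral_eq_measureReal_of_eq_zero_or_eq_one {Ω : Type*} [MeasurableSpace Ω] {μ : Measure Ω}
    {X : Ω → ℝ} (hX : Measurable X) (h01 : ∀ ω, X ω = 0 ∨ X ω = 1) :
    μ[X] = μ.real {ω | X ω = 1} := by
  have hind : X = {ω | X ω = 1}.indicator 1 := by
    ext ω
    rcases h01 ω with h | h <;> simp [h]
  conv_lhs => rw [hind]
  exact integral_indicator_one (hX (measurableSet_singleton 1))

section Numerics

variable {N : ℕ} {d : ℝ}

lemma choose_mul_exp_le (hN : 1 ≤ N) (hd : 0 ≤ d) {j : ℕ} (hj : 2 * j ≤ N) :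
    (N.choose j : ℝ) * exp (-(2 * d * log N / N) * ((j + 1) * (N + 1 - j))) ≤
      exp (-(2 * d * log N)) * exp (-((d - 1) * log N)) ^ j := by
  have hN0 : (0 : ℝ) < N := by exact_mod_cast hN
  have hL : 0 ≤ log N := log_nonneg (by exact_mod_cast hN)
  have hchoose : (N.choose j : ℝ) ≤ exp (j * log N) := by
    rw [exp_nat_mul, exp_log hN0]
    exact_mod_cast Nat.choose_le_pow N j
  have hj' : 2 * (j : ℝ) ≤ N := by exact_mod_cast hj
  -- the difference of the two sides is `j * (N - 2 * j) + 2`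
  have hprod : (j + 2) * (N : ℝ) ≤ 2 * ((j + 1) * (N + 1 - j)) := by nlinarith
  have hexp : d * log N * (j + 2) ≤ 2 * d * log N / N * ((j + 1) * (N + 1 - j)) := by
    rw [div_mul_eq_mul_div, le_div_iff₀ hN0]
    nlinarith [mul_le_mul_of_nonneg_left hprod (mul_nonneg hd hL)]
  calc (N.choose j : ℝ) * exp (-(2 * d * log N / N) * ((j + 1) * (N + 1 - j)))
      ≤ exp (j * log N) * exp (-(2 * d * log N / N) * ((j + 1) * (N + 1 - j))) := by gcongr
    _ ≤ exp (-(2 * d * log N)) * exp (-((d - 1) * log N)) ^ j := by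
      rw [← exp_nat_mul, ← exp_add, ← exp_add, exp_le_exp]
      nlinarith

lemma sum_choose_mul_exp_le (hN : 2 ≤ N) (hd : 1 < d) :
    ∑ j ∈ range (N + 1), (N.choose j : ℝ) * exp (-(2 * d * log N / N) * ((j + 1) * (N + 1 - j))) ≤
      2 / ((N : ℝ) ^ (2 * d) - (N : ℝ) ^ (d + 1)) := by
  set a : ℕ → ℝ := fun j ↦ (N.choose j : ℝ) * exp (-(2 * d * log N / N) * ((j + 1) * (N + 1 - j)))
  set r := exp (-((d - 1) * log N))
  have hN0 : (0 : ℝ) < N := by positivity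
  have hL : 0 < log N := log_pos (by exact_mod_cast hN)
  have hr : r < 1 := exp_lt_one_iff.2 (by nlinarith)
  have hsymm : ∀ j ≤ N, a (N - j) = a j := by
    intro j hj
    simp only [a, Nat.choose_symm hj, Nat.cast_sub hj]
    ring_nf
  have hterm : ∀ j ≤ N, a j ≤ exp (-(2 * d * log N)) * (r ^ j + r ^ (N - j)) := by
    intro j hj
    rcases le_total (2 * j) N with h | h
    · refine (choose_mul_exp_le (by omega) (by linarith) h).trans ?_
      gcongr
      exact le_add_of_nonneg_right (by positivity)
    · rw [← hsymm j hj]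
      refine (choose_mul_exp_le (by omega) (by linarith) (by omega)).trans ?_
      gcongr
      exact le_add_of_nonneg_left (by positivity)
  have hreflect : ∑ j ∈ range (N + 1), r ^ (N - j) = ∑ j ∈ range (N + 1), r ^ j := by
    simpa using sum_range_reflect (r ^ ·) (N + 1)
  calc ∑ j ∈ range (N + 1), a j
      ≤ ∑ j ∈ range (N + 1), exp (-(2 * d * log N)) * (r ^ j + r ^ (N - j)) :=
        sum_le_sum fun j hj ↦ hterm j (Nat.lt_succ_iff.1 (mem_range.1 hj))
    _ = 2 * exp (-(2 * d * log N)) * ∑ j ∈ Ico 0 (N + 1), r ^ j := by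
        rw [← mul_sum, sum_add_distrib, hreflect, ← range_eq_Ico]
        ring
    _ ≤ 2 * exp (-(2 * d * log N)) * (r ^ 0 / (1 - r)) := by
        gcongr
        exact geom_sum_Ico_le_of_lt_one (exp_pos _).le hr
    _ = 2 / ((N : ℝ) ^ (2 * d) - (N : ℝ) ^ (d + 1)) := by
        have hden : (N : ℝ) ^ (2 * d) - (N : ℝ) ^ (d + 1) = exp (2 * d * log N) * (1 - r) := by
          rw [rpow_def_of_pos hN0, rpow_def_of_pos hN0, mul_one_sub, ← exp_add]
          ring_nf
        have h1r : 1 - r ≠ 0 := by linarith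
        rw [hden, exp_neg]
        field_simp

end Numerics

lemma finite_setOf_exists_cut {V : Type*} [Finite V] (T : Finset V) (s : V) (f : Finset V → ℝ) :
    {x : ℝ | ∃ t ∈ T, ∃ S : Finset V, s ∈ S ∧ t ∉ S ∧ x = f S}.Finite :=
  (Set.finite_range f).subset (by rintro _ ⟨t, -, S, -, -, rfl⟩; exact ⟨S, rfl⟩)

section Cuts

variable {V : Type*} [Fintype V] [DecidableEq V]

def stCuts (s t : V) : Finset (Finset V) := {S | s ∈ S ∧ t ∉ S}

lemma mem_stCuts {s t : V} {S : Finset V} : S ∈ stCuts s t ↔ s ∈ S ∧ t ∉ S := by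
  simp [stCuts]

lemma sum_stCuts_eq {M : Type*} [AddCommMonoid M] {s t : V} (hst : s ≠ t) (f : ℕ → M) :
    ∑ S ∈ stCuts s t, f #S =
      ∑ j ∈ range (Fintype.card V - 2 + 1), (Fintype.card V - 2).choose j • f (j + 1) := by
  have hU : #((univ.erase s).erase t) = Fintype.card V - 2 := by
    rw [card_erase_of_mem (by simp [hst.symm]), card_erase_of_mem (mem_univ s), card_univ]
    omega
  rw [← hU, ← sum_powerset_apply_card fun k ↦ f (k + 1)]
  refine sum_nbij' (·.erase s) (insert s) ?_ ?_ ?_ ?_ ?_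
  · intro S hS
    rw [mem_stCuts] at hS
    simp only [mem_powerset, subset_iff, mem_erase, mem_univ]
    grind
  · intro A hA
    rw [mem_powerset, subset_iff] at hA
    simp only [mem_erase] at hA
    rw [mem_stCuts]
    grind
  · intro S hS
    exact insert_erase (mem_stCuts.1 hS).1
  · intro A hA
    exact erase_insert fun h ↦ by simpa using mem_powerset.1 hA h
  · intro S hS
    rw [card_erase_add_one (mem_stCuts.1 hS).1]

lemma sum_stCuts_exp_le {s t : V} (hst : s ≠ t) (hV : 4 ≤ Fintype.card V) {d : ℝ} (hd : 1 < d) :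
    ∑ S ∈ stCuts s t, exp (-(2 * d * log ((Fintype.card V : ℝ) - 2) / ((Fintype.card V : ℝ) - 2)) *
      (#S * #Sᶜ : ℕ)) ≤
      2 / (((Fintype.card V : ℝ) - 2) ^ (2 * d) - ((Fintype.card V : ℝ) - 2) ^ (d + 1)) := by
  obtain ⟨N, hN⟩ : ∃ N, Fintype.card V = N + 2 := ⟨_, (Nat.sub_add_cancel (by omega)).symm⟩
  have hq : (Fintype.card V : ℝ) - 2 = N := by rw [hN]; push_cast; ring
  set κ := 2 * d * log N / N
  rw [hq]
  calc ∑ S ∈ stCuts s t, exp (-κ * (#S * #Sᶜ : ℕ))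
      = ∑ S ∈ stCuts s t, exp (-κ * (#S * ((N : ℝ) + 2 - #S))) := by
        refine sum_congr rfl fun S _ ↦ ?_
        rw [card_compl, hN, Nat.cast_mul, Nat.cast_sub (hN ▸ card_le_univ S)]
        push_cast
        ring_nf
    _ = ∑ j ∈ range (N + 1),
          N.choose j • exp (-κ * ((j + 1 : ℕ) * ((N : ℝ) + 2 - (j + 1 : ℕ)))) := by
        rw [sum_stCuts_eq hst fun k ↦ exp (-κ * (k * ((N : ℝ) + 2 - k))), hN, Nat.add_sub_cancel]
    _ = ∑ j ∈ range (N + 1), (N.choose j : ℝ) * exp (-κ * ((j + 1) * (N + 1 - j))) := by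
        refine sum_congr rfl fun j _ ↦ ?_
        rw [nsmul_eq_mul]
        push_cast
        ring_nf
    _ ≤ _ := sum_choose_mul_exp_le (by omega) hd

lemma exists_mem_stCuts_le_of_sInf_le {T : Finset V} {s : V} (hT : T.Nonempty) (hsT : s ∉ T)
    {f : Finset V → ℝ} {c : ℝ}
    (h : sInf {x : ℝ | ∃ t ∈ T, ∃ S : Finset V, s ∈ S ∧ t ∉ S ∧ x = f S} ≤ c) :
    ∃ t ∈ T, ∃ S ∈ stCuts s t, f S ≤ c := by
  obtain ⟨t₀, ht₀⟩ := hT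
  have hne : {x : ℝ | ∃ t ∈ T, ∃ S : Finset V, s ∈ S ∧ t ∉ S ∧ x = f S}.Nonempty :=
    ⟨f {s}, t₀, ht₀, {s}, mem_singleton_self s, by simpa using ne_of_mem_of_not_mem ht₀ hsT, rfl⟩
  obtain ⟨t, ht, S, hsS, htS, hS⟩ := hne.csInf_mem (finite_setOf_exists_cut T s f)
  exact ⟨t, ht, S, mem_stCuts.2 ⟨hsS, htS⟩, hS ▸ h⟩

lemma cutCap_eq_sum {Ω : Type*} (C : V → V → Ω → ℝ) (S : Finset V) :
    cutCap C S = fun ω ↦ ∑ p : (S ×ˢ Sᶜ : Finset (V × V)), C (p : V × V).1 (p : V × V).2 ω := by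
  ext ω
  rw [cutCap, ← sum_product', ← sum_coe_sort]

lemma measure_cutCap_le_le {Ω : Type*} [MeasurableSpace Ω]
    {μ : Measure Ω} {C : V → V → Ω → ℝ} {S : Finset V}
    (hind : iIndepFun (fun p : (S ×ˢ Sᶜ : Finset (V × V)) ↦ C (p : V × V).1 (p : V × V).2) μ)
    (hmeas : ∀ a b, Measurable (C a b)) (h01 : ∀ a b ω, C a b ω = 0 ∨ C a b ω = 1)
    {lam ε c : ℝ} (hlam : 0 ≤ lam)
    (hlow : ∀ a ∈ S, ∀ b ∉ S, ENNReal.ofReal lam ≤ μ {ω | C a b ω = 1})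
    (hε0 : 0 ≤ ε) (hε1 : ε ≤ 1) (hc : c ≤ ∫ ω, cutCap C S ω ∂μ) :
    μ {ω | cutCap C S ω ≤ (1 - ε) * c} ≤
      ENNReal.ofReal (exp (-2 * ε ^ 2 * lam ^ 2 * (#S * #Sᶜ : ℕ))) := by
  have := hind.isProbabilityMeasure
  have hint : ∀ a b, Integrable (C a b) μ := fun a b ↦
    .of_bound (hmeas a b).aestronglyMeasurable 1
      (ae_of_all _ fun ω ↦ by rcases h01 a b ω with h | h <;> simp [h])
  have hedge : ∀ p : (S ×ˢ Sᶜ : Finset (V × V)), lam ≤ μ[C (p : V × V).1 (p : V × V).2] := by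
    rintro ⟨⟨a, b⟩, hab⟩
    rw [mem_product, mem_compl] at hab
    rw [integral_eq_measureReal_of_eq_zero_or_eq_one (hmeas a b) (h01 a b)]
    exact (ENNReal.ofReal_le_iff_le_toReal (measure_ne_top _ _)).1 (hlow a hab.1 b hab.2)
  rw [cutCap_eq_sum] at hc ⊢
  rw [integral_finsetSum _ fun p _ ↦ hint _ _] at hc
  have hcard : (Fintype.card (S ×ˢ Sᶜ : Finset (V × V)) : ℝ) = (#S * #Sᶜ : ℕ) := by
    rw [Fintype.card_coe, card_product]
  rw [← ofReal_measureReal, ← hcard]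
  refine ENNReal.ofReal_le_ofReal
    (measureReal_sum_le_mul_le hind (fun p ↦ (hmeas _ _).aemeasurable)
      (fun p ↦ ae_of_all _ fun ω ↦ ?_)
      hlam hedge hε0 hε1 hc)
  rcases h01 (p : V × V).1 (p : V × V).2 ω with h | h <;> simp [h]

lemma measure_biUnion_stCuts_le {Ω : Type*} [MeasureSpace Ω]
    {C : V → V → Ω → ℝ} {s t : V} (hst : s ≠ t) (hV : 4 ≤ Fintype.card V)
    (hind : IndepInCut C s t) (hmeas : ∀ a b, Measurable (C a b))
    (h01 : ∀ a b ω, C a b ω = 0 ∨ C a b ω = 1) {lam : ℝ} (hlam : 0 ≤ lam)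
    (hlow : ∀ a b : V, a ≠ b → ENNReal.ofReal lam ≤ volume {ω | C a b ω = 1})
    {d ε c : ℝ} (hd : 1 < d) (hε0 : 0 ≤ ε) (hε1 : ε ≤ 1)
    (hεlam : ε ^ 2 * lam ^ 2 =
      d * log ((Fintype.card V : ℝ) - 2) / ((Fintype.card V : ℝ) - 2))
    (hc : ∀ S ∈ stCuts s t, c ≤ ∫ ω, cutCap C S ω) :
    volume (⋃ S ∈ stCuts s t, {ω | cutCap C S ω ≤ (1 - ε) * c}) ≤
      ENNReal.ofReal
        (2 / (((Fintype.card V : ℝ) - 2) ^ (2 * d) - ((Fintype.card V : ℝ) - 2) ^ (d + 1))) := by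
  have hcut : ∀ S ∈ stCuts s t, volume {ω | cutCap C S ω ≤ (1 - ε) * c} ≤
      ENNReal.ofReal (exp (-(2 * d * log ((Fintype.card V : ℝ) - 2) /
        ((Fintype.card V : ℝ) - 2)) * (#S * #Sᶜ : ℕ))) := by
    intro S hS
    obtain ⟨hsS, htS⟩ := mem_stCuts.1 hS
    convert measure_cutCap_le_le (hind S hsS htS) hmeas h01 hlam
      (fun a ha b hb ↦ hlow a b (ne_of_mem_of_not_mem ha hb)) hε0 hε1 (hc S hS) using 4
    linear_combination 2 * hεlam
  calc volume (⋃ S ∈ stCuts s t, {ω | cutCap C S ω ≤ (1 - ε) * c})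
      ≤ ∑ S ∈ stCuts s t, volume {ω | cutCap C S ω ≤ (1 - ε) * c} := measure_biUnion_finset_le _ _
    _ ≤ _ := (sum_le_sum hcut).trans_eq (ENNReal.ofReal_sum_of_nonneg fun S _ ↦ (exp_pos _).le).symm
    _ ≤ _ := ENNReal.ofReal_le_ofReal (sum_stCuts_exp_le hst hV hd)

end Cuts

theorem stmt_4_general {V Ω : Type*} [Fintype V] [DecidableEq V] [MeasureSpace Ω]
    (n : ℕ) (hn : Fintype.card V = n) (hn4 : 4 ≤ n)
    (s : V) (T : Finset V) (hT : T.Nonempty) (hsT : s ∉ T)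
    (α : ℕ) (hα : α = T.card)
    (lam : ℝ) (hlam0 : 0 < lam)
    (C : V → V → Ω → ℝ)
    (hmeas : ∀ a b, Measurable (C a b))
    (h01 : ∀ a b ω, C a b ω = 0 ∨ C a b ω = 1)
    (hlow : ∀ a b : V, a ≠ b → ENNReal.ofReal lam ≤ volume {ω | C a b ω = 1})
    (hindep : ∀ t ∈ T, IndepInCut C s t)
    (d : ℝ) (hd1 : 1 < d) (hd2 : d < lam ^ 2 * ((n : ℝ) - 2) / Real.log ((n : ℝ) - 2))
    (ε : ℝ) (hε : ε = Real.sqrt (d * Real.log ((n : ℝ) - 2) / (lam ^ 2 * ((n : ℝ) - 2))))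
    (cmin : ℝ)
    (hcmin : cmin = sInf {x : ℝ | ∃ t ∈ T, ∃ S : Finset V, s ∈ S ∧ t ∉ S ∧
        x = ∫ ω, cutCap C S ω}) :
    volume {ω | sInf {x : ℝ | ∃ t ∈ T, ∃ S : Finset V, s ∈ S ∧ t ∉ S ∧
          x = cutCap C S ω} ≤ (1 - ε) * cmin}
      ≤ ENNReal.ofReal
          (2 * (α : ℝ) / (((n : ℝ) - 2) ^ (2 * d) - ((n : ℝ) - 2) ^ (d + 1))) := by
  subst hn hα
  set q : ℝ := (Fintype.card V : ℝ) - 2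
  have hq : 2 ≤ q := by
    have : (4 : ℝ) ≤ Fintype.card V := by exact_mod_cast hn4
    linarith
  have hL : 0 < log q := log_pos (by linarith)
  have hε0 : 0 ≤ ε := hε ▸ sqrt_nonneg _
  have hε1 : ε ≤ 1 := by
    rw [hε, sqrt_le_one, div_le_one (by positivity)]
    exact ((lt_div_iff₀ hL).1 hd2).le
  have hεlam : ε ^ 2 * lam ^ 2 = d * log q / q := by
    rw [hε, sq_sqrt (by positivity)]
    field_simp
  have hcmin_le : ∀ t ∈ T, ∀ S ∈ stCuts s t, cmin ≤ ∫ ω, cutCap C S ω := fun t ht S hS ↦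
    hcmin ▸ csInf_le (finite_setOf_exists_cut T s _).bddBelow
      ⟨t, ht, S, (mem_stCuts.1 hS).1, (mem_stCuts.1 hS).2, rfl⟩
  calc volume {ω | sInf {x : ℝ | ∃ t ∈ T, ∃ S : Finset V, s ∈ S ∧ t ∉ S ∧
          x = cutCap C S ω} ≤ (1 - ε) * cmin}
      ≤ volume (⋃ t ∈ T, ⋃ S ∈ stCuts s t, {ω | cutCap C S ω ≤ (1 - ε) * cmin}) :=
        measure_mono fun ω hω ↦ by
          obtain ⟨t, ht, S, hS, hle⟩ := exists_mem_stCuts_le_of_sInf_le hT hsT hω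
          exact Set.mem_biUnion ht (Set.mem_biUnion hS hle)
    _ ≤ ∑ t ∈ T, ENNReal.ofReal (2 / (q ^ (2 * d) - q ^ (d + 1))) :=
        (measure_biUnion_finset_le _ _).trans <| sum_le_sum fun t ht ↦
          measure_biUnion_stCuts_le (ne_of_mem_of_not_mem ht hsT).symm hn4 (hindep t ht) hmeas h01
            hlam0.le hlow hd1 hε0 hε1 hεlam (hcmin_le t ht)
    _ = ENNReal.ofReal (2 * (#T : ℝ) / (q ^ (2 * d) - q ^ (d + 1))) := by
        rw [sum_const, nsmul_eq_mul, ← ENNReal.ofReal_natCast, ← ENNReal.ofReal_mul (by positivity),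
          mul_comm]
        ring_nf

/-- lower-tail half of the paper's Theorem 1.
`P(C_{s;T} ≤ (1-ε) c_min) ≤ 2 α / ((n-2)^{2d} - (n-2)^{d+1})` where
`ε = sqrt(d ln(n-2) / (λ² (n-2)))`. -/
theorem stmt_4 {V Ω : Type*} [Fintype V] [DecidableEq V] [MeasureSpace Ω]
    [IsProbabilityMeasure (volume : Measure Ω)]
    (n : ℕ) (hn : Fintype.card V = n) (hn4 : 4 ≤ n)
    (s : V) (T : Finset V) (hT : T.Nonempty) (hsT : s ∉ T)
    (α : ℕ) (hα : α = T.card)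
    (lam : ℝ) (hlam0 : 0 < lam) (hlam1 : lam ≤ 1)
    (C : V → V → Ω → ℝ)
    (hsymm : ∀ a b, C a b = C b a)
    (hmeas : ∀ a b, Measurable (C a b))
    (h01 : ∀ a b ω, C a b ω = 0 ∨ C a b ω = 1)
    (hlow : ∀ a b : V, a ≠ b → ENNReal.ofReal lam ≤ volume {ω | C a b ω = 1})
    (hindep : ∀ t ∈ T, IndepInCut C s t)
    (hln : Real.log ((n : ℝ) - 2) < lam ^ 2 * ((n : ℝ) - 2))
    (d : ℝ) (hd1 : 1 < d) (hd2 : d < lam ^ 2 * ((n : ℝ) - 2) / Real.log ((n : ℝ) - 2))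
    (ε : ℝ) (hε : ε = Real.sqrt (d * Real.log ((n : ℝ) - 2) / (lam ^ 2 * ((n : ℝ) - 2))))
    (cmin : ℝ)
    (hcmin : cmin = sInf {x : ℝ | ∃ t ∈ T, ∃ S : Finset V, s ∈ S ∧ t ∉ S ∧
        x = ∫ ω, cutCap C S ω}) :
    volume {ω | sInf {x : ℝ | ∃ t ∈ T, ∃ S : Finset V, s ∈ S ∧ t ∉ S ∧
          x = cutCap C S ω} ≤ (1 - ε) * cmin}
      ≤ ENNReal.ofReal
          (2 * (α : ℝ) / (((n : ℝ) - 2) ^ (2 * d) - ((n : ℝ) - 2) ^ (d + 1))) :=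
  stmt_4_general n hn hn4 s T hT hsT α hα lam hlam0 C hmeas h01 hlow hindep d hd1 hd2 ε hε cmin
    hcmin
end

section
/- Let V be a finite set of n ≥ 4 vertices carrying a random graph as in the context, let s ∈ V be a source, let T ⊆ V∖{s} be a nonempty set of α terminals, and let λ ∈ (0,1]. Suppose P(C_{a,b} = 1) ≥ λ for every unordered pair {a,b} of distinct vertices, and that for every t ∈ T the random graph has the independence-in-cut property for (s,t). Assume λ²·(n−2) > ln(n−2), let d be a real with 1 < d < λ²·(n−2)/ln(n−2), and set ε = sqrt( d·ln(n−2) / (λ²·(n−2)) ). Then P( C_{s;T} ≥ (1+ε)·c_min ) ≤ (n−2)^{−2d}. -/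
open MeasureTheory ProbabilityTheory Finset

/-!
The minimum expected cut `c_min` is attained by some `s`-`t` cut `S` with `t ∈ T`, and
`C_{s;T} ≤ C(S)` pointwise. The capacity `C(S)` is a sum of `m = |S|·|Sᶜ| ≥ n - 2` independent
Bernoulli variables of mean at least `λ`, so `c_min = 𝔼 C(S) ≥ λ m`, and Hoeffding's
inequality bounds `P(C(S) ≥ c_min + ε c_min)` by
`exp(-2 ε² c_min² / m) ≤ exp(-2 ε² λ² (n - 2)) ≤ (n - 2)^{-2d}`.
-/

open Real

lemma measureReal_sum_ge_le_of_mem_Icc {Ω ι : Type*} [MeasurableSpace Ω] {μ : Measure Ω}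
    [IsProbabilityMeasure μ] [Fintype ι] {X : ι → Ω → ℝ} (h_indep : iIndepFun X μ)
    (hmeas : ∀ i, AEMeasurable (X i) μ) {a b : ℝ}
    (hX : ∀ i, ∀ᵐ ω ∂μ, X i ω ∈ Set.Icc a b) {σ : ℝ} (hσ : 0 ≤ σ) :
    μ.real {ω | ∑ i, μ[X i] + σ ≤ ∑ i, X i ω} ≤
      exp (-(2 * σ ^ 2 / (Fintype.card ι * (b - a) ^ 2))) := by
  have h_indep' : iIndepFun (fun i ω => X i ω - μ[X i]) μ :=
    h_indep.comp _ fun i => measurable_sub_const _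
  have h_centered := HasSubgaussianMGF.measure_sum_ge_le_of_iIndepFun (s := univ) h_indep'
    (fun i _ => hasSubgaussianMGF_of_mem_Icc (hmeas i) (hX i)) hσ
  convert h_centered using 2
  · ext ω
    simp only [Set.mem_ofPred_eq, sum_sub_distrib]
    constructor <;> intro h <;> linarith
  · generalize b - a = w
    simp only [sum_const, card_univ, nsmul_eq_mul, NNReal.coe_mul, NNReal.coe_natCast,
      NNReal.coe_pow, NNReal.coe_div, NNReal.coe_ofNat, coe_nnnorm, Real.norm_eq_abs, div_pow,
      sq_abs]
    ring

lemma exp_neg_two_mul_sq_div_le_rpow {N m lam c ε d : ℝ} (hN : 0 < N) (hNm : N ≤ m)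
    (hlam : 0 ≤ lam) (hc : lam * m ≤ c) (hε : d * log N ≤ ε ^ 2 * (lam ^ 2 * N)) :
    exp (-(2 * (ε * c) ^ 2 / m)) ≤ N ^ (-(2 * d)) := by
  have hm : 0 < m := hN.trans_le hNm
  rw [rpow_def_of_pos hN, exp_le_exp, neg_le, mul_neg, neg_neg, le_div_iff₀ hm]
  have hc_sq : (lam * m) ^ 2 ≤ c ^ 2 := pow_le_pow_left₀ (by positivity) hc 2
  nlinarith [mul_le_mul_of_nonneg_left hNm (by positivity : 0 ≤ ε ^ 2 * lam ^ 2 * m)]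

lemma integral_eq_measureReal_of_zero_or_one {Ω : Type*} [MeasurableSpace Ω] {μ : Measure Ω}
    {f : Ω → ℝ} (hf : Measurable f) (h01 : ∀ ω, f ω = 0 ∨ f ω = 1) :
    ∫ ω, f ω ∂μ = μ.real {ω | f ω = 1} := by
  have hf_eq : f = {ω | f ω = 1}.indicator 1 := by
    ext ω
    rcases h01 ω with h | h <;> simp [h]
  conv_lhs => rw [hf_eq]
  exact integral_indicator_one (hf (measurableSet_singleton 1))

lemma mem_Icc_of_eq_zero_or_eq_one {x : ℝ} (h : x = 0 ∨ x = 1) : x ∈ Set.Icc (0 : ℝ) 1 := by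
  rcases h with rfl | rfl <;> simp

lemma integrable_of_zero_or_one {Ω : Type*} [MeasurableSpace Ω] {μ : Measure Ω}
    [IsFiniteMeasure μ] {f : Ω → ℝ} (hf : Measurable f) (h01 : ∀ ω, f ω = 0 ∨ f ω = 1) :
    Integrable f μ :=
  Integrable.of_mem_Icc 0 1 hf.aemeasurable <|
    ae_of_all _ fun ω => mem_Icc_of_eq_zero_or_eq_one (h01 ω)

/-- `C_{s;T}` and `c_min` are `sInf (cutValues s T f)` for `f = C(·)` and `f = 𝔼 C(·)`. -/
def cutValues {V : Type*} (s : V) (T : Finset V) (f : Finset V → ℝ) : Set ℝ :=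
  {x | ∃ t ∈ T, ∃ S : Finset V, s ∈ S ∧ t ∉ S ∧ x = f S}

section Cuts

variable {V Ω : Type*} [Fintype V]

lemma cutValues_finite (s : V) (T : Finset V) (f : Finset V → ℝ) : (cutValues s T f).Finite :=
  (Set.finite_range f).subset <| by rintro x ⟨t, -, S, -, -, rfl⟩; exact ⟨S, rfl⟩

lemma sInf_cutValues_le {s t : V} {T S : Finset V} (f : Finset V → ℝ) (ht : t ∈ T) (hs : s ∈ S)
    (htS : t ∉ S) : sInf (cutValues s T f) ≤ f S :=
  csInf_le (cutValues_finite s T f).bddBelow ⟨t, ht, S, hs, htS, rfl⟩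

lemma exists_cut_eq_sInf_cutValues {s : V} {T : Finset V} (hT : T.Nonempty) (hsT : s ∉ T)
    (f : Finset V → ℝ) : ∃ t ∈ T, ∃ S : Finset V, s ∈ S ∧ t ∉ S ∧ sInf (cutValues s T f) = f S := by
  obtain ⟨t, ht⟩ := hT
  have hne : (cutValues s T f).Nonempty :=
    ⟨f {s}, t, ht, {s}, mem_singleton_self s, notMem_singleton.2 (ne_of_mem_of_not_mem ht hsT),
      rfl⟩
  obtain ⟨t, ht, S, hs, htS, hS⟩ := hne.csInf_mem (cutValues_finite s T f)
  exact ⟨t, ht, S, hs, htS, hS⟩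

variable [DecidableEq V]

lemma card_le_card_mul_card_compl_add_one {S : Finset V} (hS : S.Nonempty) (hSc : Sᶜ.Nonempty) :
    Fintype.card V ≤ #S * #Sᶜ + 1 := by
  have h_add := card_add_card_compl S
  have h1 := hS.card_pos
  have h2 := hSc.card_pos
  nlinarith

lemma cutCap_eq_sum_crossing (C : V → V → Ω → ℝ) (S : Finset V) (ω : Ω) :
    cutCap C S ω = ∑ p : (S ×ˢ Sᶜ : Finset (V × V)), C (p : V × V).1 (p : V × V).2 ω := by
  rw [cutCap, sum_coe_sort (S ×ˢ Sᶜ) (fun p => C p.1 p.2 ω), sum_product]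

variable [MeasureSpace Ω] {C : V → V → Ω → ℝ}

lemma mul_card_le_integral_cutCap [IsFiniteMeasure (volume : Measure Ω)]
    (hmeas : ∀ a b, Measurable (C a b)) (h01 : ∀ a b ω, C a b ω = 0 ∨ C a b ω = 1) {lam : ℝ}
    (hlow : ∀ a b : V, a ≠ b → ENNReal.ofReal lam ≤ volume {ω | C a b ω = 1}) (S : Finset V) :
    lam * (#S * #Sᶜ) ≤ ∫ ω, cutCap C S ω := by
  have hint : ∀ a b, Integrable (C a b) :=
    fun a b => integrable_of_zero_or_one (hmeas a b) (h01 a b)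
  calc lam * (#S * #Sᶜ) = ∑ a ∈ S, ∑ b ∈ Sᶜ, lam := by simp [mul_comm, mul_left_comm]
    _ ≤ ∑ a ∈ S, ∑ b ∈ Sᶜ, ∫ ω, C a b ω := by
      refine sum_le_sum fun a ha => sum_le_sum fun b hb => ?_
      rw [integral_eq_measureReal_of_zero_or_one (hmeas a b) (h01 a b)]
      exact (ENNReal.ofReal_le_iff_le_toReal (measure_ne_top _ _)).1
        (hlow a b (ne_of_mem_of_not_mem ha (mem_compl.1 hb)))
    _ = ∫ ω, cutCap C S ω := by
      simp only [cutCap]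
      rw [integral_finsetSum _ fun a _ => integrable_finsetSum _ fun b _ => hint a b]
      exact sum_congr rfl fun a _ => (integral_finsetSum _ fun b _ => hint a b).symm

lemma measureReal_cutCap_ge_le [IsProbabilityMeasure (volume : Measure Ω)]
    (hmeas : ∀ a b, Measurable (C a b)) (h01 : ∀ a b ω, C a b ω = 0 ∨ C a b ω = 1) {S : Finset V}
    (hindep : iIndepFun
      (fun p : (S ×ˢ Sᶜ : Finset (V × V)) => C (p : V × V).1 (p : V × V).2) volume)
    {σ : ℝ} (hσ : 0 ≤ σ) :
    volume.real {ω | (∫ ω', cutCap C S ω') + σ ≤ cutCap C S ω} ≤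
      exp (-(2 * σ ^ 2 / (#S * #Sᶜ))) := by
  have h_hoeffding := measureReal_sum_ge_le_of_mem_Icc hindep
    (fun p => (hmeas _ _).aemeasurable)
    (fun p => ae_of_all _ fun ω => mem_Icc_of_eq_zero_or_eq_one (h01 _ _ ω)) hσ
  have h_mean : ∑ p : (S ×ˢ Sᶜ : Finset (V × V)), ∫ ω, C (p : V × V).1 (p : V × V).2 ω =
      ∫ ω, cutCap C S ω := by
    simp only [cutCap_eq_sum_crossing]
    exact (integral_finsetSum _ fun p _ => integrable_of_zero_or_one (hmeas _ _) (h01 _ _)).symm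
  simpa only [← cutCap_eq_sum_crossing, h_mean, Fintype.card_coe, card_product, Nat.cast_mul,
    sub_zero, one_pow, mul_one] using h_hoeffding

end Cuts

theorem stmt_5_general {V Ω : Type*} [Fintype V] [DecidableEq V] [MeasureSpace Ω]
    [IsProbabilityMeasure (volume : Measure Ω)]
    (n : ℕ) (hn : Fintype.card V = n) (hn4 : 4 ≤ n)
    (s : V) (T : Finset V) (hT : T.Nonempty) (hsT : s ∉ T)
    (lam : ℝ) (hlam0 : 0 < lam)
    (C : V → V → Ω → ℝ)
    (hmeas : ∀ a b, Measurable (C a b))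
    (h01 : ∀ a b ω, C a b ω = 0 ∨ C a b ω = 1)
    (hlow : ∀ a b : V, a ≠ b → ENNReal.ofReal lam ≤ volume {ω | C a b ω = 1})
    (hindep : ∀ t ∈ T, IndepInCut C s t)
    (d : ℝ)
    (ε : ℝ) (hε : ε = Real.sqrt (d * Real.log ((n : ℝ) - 2) / (lam ^ 2 * ((n : ℝ) - 2))))
    (cmin : ℝ)
    (hcmin : cmin = sInf {x : ℝ | ∃ t ∈ T, ∃ S : Finset V, s ∈ S ∧ t ∉ S ∧
        x = ∫ ω, cutCap C S ω}) :
    volume {ω | (1 + ε) * cmin ≤ sInf {x : ℝ | ∃ t ∈ T, ∃ S : Finset V, s ∈ S ∧ t ∉ S ∧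
          x = cutCap C S ω}}
      ≤ ENNReal.ofReal (((n : ℝ) - 2) ^ (-(2 * d))) := by
  have hn2 : (0 : ℝ) < n - 2 := by
    have : (4 : ℝ) ≤ n := by exact_mod_cast hn4
    linarith
  obtain ⟨t, ht, S, hs, htS, hS⟩ :=
    exists_cut_eq_sInf_cutValues hT hsT fun S => ∫ ω, cutCap C S ω
  replace hcmin : cmin = ∫ ω, cutCap C S ω := hcmin.trans hS
  set m : ℝ := #S * #Sᶜ
  have hm : (n : ℝ) - 2 < m := by
    have h := card_le_card_mul_card_compl_add_one ⟨s, hs⟩ ⟨t, mem_compl.2 htS⟩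
    have : (n : ℝ) ≤ (#S * #Sᶜ + 1 : ℕ) := by exact_mod_cast hn ▸ h
    push_cast at this
    linarith
  have hmean : lam * m ≤ cmin := hcmin ▸ mul_card_le_integral_cutCap hmeas h01 hlow S
  have hε0 : 0 ≤ ε := hε ▸ sqrt_nonneg _
  have hcmin0 : 0 ≤ cmin := (by positivity : 0 ≤ lam * m).trans hmean
  have hε2 : d * log (n - 2) ≤ ε ^ 2 * (lam ^ 2 * (n - 2)) := by
    rw [hε, sq_sqrt', ← div_le_iff₀ (by positivity)]
    exact le_max_left _ _
  calc volume {ω | (1 + ε) * cmin ≤ sInf (cutValues s T fun S => cutCap C S ω)}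
      ≤ volume {ω | (∫ ω', cutCap C S ω') + ε * cmin ≤ cutCap C S ω} := by
        refine measure_mono fun ω hω => ?_
        have := sInf_cutValues_le (fun S => cutCap C S ω) ht hs htS
        simp only [Set.mem_ofPred_eq] at hω ⊢
        linarith
    _ = ENNReal.ofReal (volume.real {ω | (∫ ω', cutCap C S ω') + ε * cmin ≤ cutCap C S ω}) :=
        (ofReal_measureReal).symm
    _ ≤ ENNReal.ofReal (exp (-(2 * (ε * cmin) ^ 2 / m))) :=
        ENNReal.ofReal_le_ofReal <|
          measureReal_cutCap_ge_le hmeas h01 (hindep t ht S hs htS) (by positivity)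
    _ ≤ ENNReal.ofReal (((n : ℝ) - 2) ^ (-(2 * d))) := by
        gcongr
        exact exp_neg_two_mul_sq_div_le_rpow hn2 hm.le hlam0.le hmean hε2

/-- upper-tail half of the paper's Theorem 1.
`P(C_{s;T} ≥ (1+ε) c_min) ≤ (n-2)^{-2d}` where `ε = sqrt(d ln(n-2) / (λ² (n-2)))`. -/
theorem stmt_5 {V Ω : Type*} [Fintype V] [DecidableEq V] [MeasureSpace Ω]
    [IsProbabilityMeasure (volume : Measure Ω)]
    (n : ℕ) (hn : Fintype.card V = n) (hn4 : 4 ≤ n)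
    (s : V) (T : Finset V) (hT : T.Nonempty) (hsT : s ∉ T)
    (α : ℕ) (hα : α = T.card)
    (lam : ℝ) (hlam0 : 0 < lam) (hlam1 : lam ≤ 1)
    (C : V → V → Ω → ℝ)
    (hsymm : ∀ a b, C a b = C b a)
    (hmeas : ∀ a b, Measurable (C a b))
    (h01 : ∀ a b ω, C a b ω = 0 ∨ C a b ω = 1)
    (hlow : ∀ a b : V, a ≠ b → ENNReal.ofReal lam ≤ volume {ω | C a b ω = 1})
    (hindep : ∀ t ∈ T, IndepInCut C s t)
    (hln : Real.log ((n : ℝ) - 2) < lam ^ 2 * ((n : ℝ) - 2))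
    (d : ℝ) (hd1 : 1 < d) (hd2 : d < lam ^ 2 * ((n : ℝ) - 2) / Real.log ((n : ℝ) - 2))
    (ε : ℝ) (hε : ε = Real.sqrt (d * Real.log ((n : ℝ) - 2) / (lam ^ 2 * ((n : ℝ) - 2))))
    (cmin : ℝ)
    (hcmin : cmin = sInf {x : ℝ | ∃ t ∈ T, ∃ S : Finset V, s ∈ S ∧ t ∉ S ∧
        x = ∫ ω, cutCap C S ω}) :
    volume {ω | (1 + ε) * cmin ≤ sInf {x : ℝ | ∃ t ∈ T, ∃ S : Finset V, s ∈ S ∧ t ∉ S ∧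
          x = cutCap C S ω}}
      ≤ ENNReal.ofReal (((n : ℝ) - 2) ^ (-(2 * d))) :=
  stmt_5_general n hn hn4 s T hT hsT lam hlam0 C hmeas h01 hlow hindep d ε hε cmin hcmin
end
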